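/- In the NFA for the next field of a QNode, every directed cycle contains at least one 'begin new acquisition' edge. -/

import Mathlib

/-!
Rank the states by O₂ > M₁ > S₁ > P₁, O₁. Every edge that does not begin an acquisition strictly
lowers the rank, so no cycle can consist of such edges alone.
-/

/-- States of the NFA for the next field of a QNode. -/
inductive N : Type
  | O1 | O2 | S1 | P1 | M1
deriving DecidableEq

/-- Edges of the next-field NFA; the Boolean flag marks 'begin acquisition'
edges. -/
inductive E : N → N → Bool → Prop
  | a1 : E .O1 .O2 true
  | a2 : E .S1 .O2 true
  | a3 : E .S1 .S1 true
  | a4 : E .P1 .O2 true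
  | a5 : E .P1 .P1 true
  | a6 : E .M1 .M1 true
  | e1 : E .O2 .O1 false
  | e2 : E .O2 .S1 false
  | e3 : E .S1 .P1 false
  | e4 : E .O2 .M1 false
  | e5 : E .M1 .S1 false

theorem Relation.not_transGen_self_of_map_lt {α β : Type*} [Preorder β] {r : α → α → Prop}
    (f : α → β) (hf : ∀ a b, r a b → f b < f a) (a : α) : ¬ Relation.TransGen r a a := by
  intro h
  have hlt := h.lift (p := (· > ·)) f hf
  rw [Relation.transGen_eq_self] at hlt
  exact lt_irrefl _ hlt

namespace N

def rank : N → ℕ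
  | O2 => 3
  | M1 => 2
  | S1 => 1
  | P1 => 0
  | O1 => 0

theorem rank_lt_of_E_false {a b : N} (h : E a b false) : b.rank < a.rank := by
  cases h <;> decide

end N

/-- Every directed cycle of the next-field NFA contains at least one
'begin acquisition' edge. -/
theorem next_field_livelock_free :
    ∀ s : N, ¬ Relation.TransGen (fun a b => E a b false) s s :=
  Relation.not_transGen_self_of_map_lt N.rank fun _ _ => N.rank_lt_of_E_false
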